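/- arXiv:2508.17569 — 5 statements merged into one kernel-verified Lean document; each statement's English description precedes it below -/
import Mathlib

section
/- A connected graph has a strong orientation (an orientation in which every vertex can reach every other vertex by a directed path) if and only if it has no bridge. -/
open SimpleGraph

/-- `R` is an orientation of the simple graph `G`: every arc of `R` lies on an edge of `G`,
and every edge of `G` receives exactly one of its two possible directions. -/
def IsOrientation {V : Type*} (G : SimpleGraph V) (R : V → V → Prop) : Prop :=
  (∀ u v, R u v → G.Adj u v) ∧ ∀ u v, G.Adj u v → (R u v ↔ ¬ R v u)

/-- `RelPow R k u v` : there is a directed walk of length `k` from `u` to `v`. -/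
def RelPow {V : Type*} (R : V → V → Prop) : ℕ → V → V → Prop
  | 0, u, v => u = v
  | n + 1, u, v => ∃ w, R u w ∧ RelPow R n w v

/-- The digraph `R` has diameter at most `d`: any vertex can reach any other by a
directed walk of length at most `d`. -/
def DiamLE {V : Type*} (R : V → V → Prop) (d : ℕ) : Prop :=
  ∀ u v, ∃ k ≤ d, RelPow R k u v

/-- A digraph is strongly connected if every vertex can reach every other. -/
def StronglyConnected {V : Type*} (R : V → V → Prop) : Prop :=
  ∀ u v, Relation.ReflTransGen R u v

/-- A graph is bridgeless if it is connected and contains no bridge. -/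
def Bridgeless {V : Type*} (G : SimpleGraph V) : Prop :=
  G.Connected ∧ ∀ e, ¬ G.IsBridge e

/-- The graph `G_{n,d}`: the path `u_1 … u_d` is the set of indices `0,…,d-1`,
the clique `K_{n-d-1}` is the set of indices `d,…,n-2`, both endpoints `0` and `d-1`
of the path are joined to all clique vertices, and the extra vertex `u_3'` is the
index `n-1`, joined to `u_2, u_3, u_4`, i.e. to indices `1, 2, 3`. -/
def Gnd (n d : ℕ) : SimpleGraph (Fin n) :=
  SimpleGraph.fromRel (fun i j =>
    ((i : ℕ) + 1 = (j : ℕ) ∧ (j : ℕ) < d) ∨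
    (d ≤ (i : ℕ) ∧ (i : ℕ) < n - 1 ∧ d ≤ (j : ℕ) ∧ (j : ℕ) < n - 1) ∨
    (((i : ℕ) = 0 ∨ (i : ℕ) = d - 1) ∧ d ≤ (j : ℕ) ∧ (j : ℕ) < n - 1) ∨
    ((i : ℕ) = n - 1 ∧ ((j : ℕ) = 1 ∨ (j : ℕ) = 2 ∨ (j : ℕ) = 3)))

/-- The graph `H_{n,n-2}`: the cycle `u_1 … u_{n-1} u_1` is the set of indices
`0,…,n-2` in cyclic order, and the extra vertex `u_3'` is the index `n-1`,
joined to `u_2, u_3, u_4`, i.e. to indices `1, 2, 3`. -/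
def Hgraph (n : ℕ) : SimpleGraph (Fin n) :=
  SimpleGraph.fromRel (fun i j =>
    ((i : ℕ) + 1 = (j : ℕ) ∧ (j : ℕ) ≤ n - 2) ∨
    ((i : ℕ) = 0 ∧ (j : ℕ) = n - 2) ∨
    ((i : ℕ) = n - 1 ∧ ((j : ℕ) = 1 ∨ (j : ℕ) = 2 ∨ (j : ℕ) = 3)))

/-!
If the edge `uv` is oriented `u → v`, a directed walk from `v` back to `u` can be cut at its
first visit to `u`, and before that it never traverses `uv` (which would need the arc `v → u`);
so in a strong orientation no edge is a bridge.

Conversely, fix a root `r` and grow partial orientations in which every oriented edge lies in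
the strongly connected component of `r`. If an edge `ab` with `a` in that component is still
unoriented, it lies on a cycle, being no bridge; rotating the cycle to start at `a` and orienting
its unoriented edges along it keeps every vertex of the cycle in the component. Hence a maximal
partial orientation orients every edge at the component, which by connectivity is everything.
-/

open Relation

namespace Relation

variable {V : Type*}

def strongComponent (R : V → V → Prop) (r : V) : Set V :=
  {v | ReflTransGen R r v ∧ ReflTransGen R v r}

theorem strongComponent_mono {R S : V → V → Prop} (h : R ≤ S) (r : V) :
    strongComponent R r ⊆ strongComponent S r :=
  fun _ hv => ⟨ReflTransGen.mono h _ _ hv.1, ReflTransGen.mono h _ _ hv.2⟩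

end Relation

namespace SimpleGraph

variable {V : Type*} {G : SimpleGraph V}

theorem Walk.IsTrail.symm_notMem_darts {u v : V} {p : G.Walk u v} (hp : p.IsTrail)
    {d : G.Dart} (hd : d ∈ p.darts) : d.symm ∉ p.darts := fun hd' =>
  d.symm_ne (List.inj_on_of_nodup_map hp.edges_nodup hd' hd d.edge_symm)

theorem Preconnected.mem_of_adj_closed (hG : G.Preconnected) {S : Set V} {r : V} (hr : r ∈ S)
    (hS : ∀ x y, G.Adj x y → x ∈ S → y ∈ S) (v : V) : v ∈ S := by
  by_contra hv
  obtain ⟨d, -, hd, hd'⟩ := (hG r v).some.exists_boundary_dart S hr hv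
  exact hd' (hS _ _ d.adj hd)

section Bridges

variable {R : V → V → Prop}

theorem reachable_deleteEdges_of_reflTransGen (hR : ∀ x y, R x y → G.Adj x y) {u v z : V}
    (hvu : ¬ R v u) (h : ReflTransGen R z u) : (G.deleteEdges {s(u, v)}).Reachable z u := by
  induction h using ReflTransGen.head_induction_on with
  | refl => rfl
  | @head z w hzw _ ih =>
    by_cases hzu : z = u
    · rw [hzu]
    · refine Adj.reachable ?_ |>.trans ih
      refine (deleteEdges_adj ..).mpr ⟨hR _ _ hzw, ?_⟩
      intro hmem
      rcases Sym2.eq_iff.mp (Set.mem_singleton_iff.mp hmem) with ⟨rfl, -⟩ | ⟨rfl, rfl⟩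
      · exact hzu rfl
      · exact hvu hzw

theorem not_isBridge_of_reflTransGen (hR : ∀ x y, R x y → G.Adj x y) {u v : V}
    (hvu : ¬ R v u) (h : ReflTransGen R v u) : ¬ G.IsBridge s(u, v) := by
  rw [isBridge_iff, not_not]
  exact (reachable_deleteEdges_of_reflTransGen hR hvu h).symm

end Bridges

section Orienting

variable {r : V} {D : V → V → Prop}

theorem Walk.mem_strongComponent_of_mem_support :
    ∀ {x y : V} (w : G.Walk x y),
      (∀ d ∈ w.darts, D d.fst d.snd ∨
        d.fst ∈ strongComponent D r ∧ d.snd ∈ strongComponent D r) →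
      ReflTransGen D r x → ReflTransGen D y r → ∀ v ∈ w.support, v ∈ strongComponent D r
  | _, _, .nil, _, hx, hy, v, hv => by
    rw [Walk.support_nil, List.mem_singleton] at hv
    exact hv ▸ ⟨hx, hy⟩
  | _, _, .cons hxz w, hw, hx, hy, v, hv => by
    rw [Walk.darts_cons, List.forall_mem_cons] at hw
    have hz : ReflTransGen D r _ := hw.1.elim hx.tail (·.2.1)
    have hsupp := mem_strongComponent_of_mem_support w hw.2 hz hy
    rw [Walk.support_cons, List.mem_cons] at hv
    rcases hv with rfl | hv
    · exact ⟨hx, hw.1.elim (fun h => (hsupp _ w.start_mem_support).2.head h) (·.1.2)⟩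
    · exact hsupp v hv

variable (G r D) in
structure IsStrongPartialOrientation : Prop where
  adj : ∀ u v, D u v → G.Adj u v
  asymm : ∀ u v, D u v → ¬ D v u
  mem_strongComponent : ∀ u v, D u v → u ∈ strongComponent D r ∧ v ∈ strongComponent D r

theorem isStrongPartialOrientation_bot : IsStrongPartialOrientation G r ⊥ :=
  ⟨fun _ _ => False.elim, fun _ _ => False.elim, fun _ _ => False.elim⟩

variable (D) in
def extendAlong {x y : V} (w : G.Walk x y) (u v : V) : Prop :=
  D u v ∨ (∃ d ∈ w.darts, d.fst = u ∧ d.snd = v) ∧ ¬ D v u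

theorem le_extendAlong {x y : V} (w : G.Walk x y) : D ≤ extendAlong D w :=
  fun _ _ => Or.inl

theorem lt_extendAlong {x y a b : V} {w : G.Walk x y} (hw : s(a, b) ∈ w.edges)
    (hab : ¬ D a b) (hba : ¬ D b a) : D < extendAlong D w := by
  refine (le_extendAlong w).lt_of_ne fun heq => ?_
  obtain ⟨d, hd, hde⟩ := List.mem_map.mp hw
  have hnew : ¬ D d.fst d.snd ∧ ¬ D d.snd d.fst := by
    rcases Sym2.eq_iff.mp hde with ⟨h1, h2⟩ | ⟨h1, h2⟩
    · exact h1 ▸ h2 ▸ ⟨hab, hba⟩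
    · exact h1 ▸ h2 ▸ ⟨hba, hab⟩
  have hext : extendAlong D w d.fst d.snd := Or.inr ⟨⟨d, hd, rfl, rfl⟩, hnew.2⟩
  exact hnew.1 (heq ▸ hext)

theorem IsStrongPartialOrientation.extendAlong (hD : IsStrongPartialOrientation G r D)
    {x y : V} {w : G.Walk x y} (hw : w.IsTrail) (hx : x ∈ strongComponent D r)
    (hy : y ∈ strongComponent D r) :
    IsStrongPartialOrientation G r (extendAlong D w) where
  adj := by
    rintro u v (h | ⟨⟨d, -, rfl, rfl⟩, -⟩)
    · exact hD.adj _ _ h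
    · exact d.adj
  asymm := by
    rintro u v (h | ⟨⟨d, hd, rfl, rfl⟩, hn⟩) (h' | ⟨⟨d', hd', h1, h2⟩, hn'⟩)
    · exact hD.asymm _ _ h h'
    · exact hn' h
    · exact hn h'
    · exact hw.symm_notMem_darts hd (Dart.ext d' d.symm (Prod.ext h1 h2) ▸ hd')
  mem_strongComponent := by
    have hmono := strongComponent_mono (le_extendAlong (D := D) w) r
    have hsupp : ∀ v ∈ w.support, v ∈ strongComponent (SimpleGraph.extendAlong D w) r := by
      refine w.mem_strongComponent_of_mem_support (fun d hd => ?_) (hmono hx).1 (hmono hy).2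
      by_cases h : D d.snd d.fst
      · exact Or.inr ⟨hmono (hD.mem_strongComponent _ _ h).2,
          hmono (hD.mem_strongComponent _ _ h).1⟩
      · exact Or.inl (Or.inr ⟨⟨d, hd, rfl, rfl⟩, h⟩)
    rintro u v (h | ⟨⟨d, hd, rfl, rfl⟩, -⟩)
    · exact ⟨hmono (hD.mem_strongComponent _ _ h).1, hmono (hD.mem_strongComponent _ _ h).2⟩
    · exact ⟨hsupp _ (w.dart_fst_mem_support_of_mem_darts hd),
        hsupp _ (w.dart_snd_mem_support_of_mem_darts hd)⟩

theorem IsStrongPartialOrientation.exists_gt (hD : IsStrongPartialOrientation G r D)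
    {a b : V} (hab : G.Adj a b) (hB : ¬ G.IsBridge s(a, b)) (ha : a ∈ strongComponent D r)
    (hnab : ¬ D a b) (hnba : ¬ D b a) :
    ∃ D', IsStrongPartialOrientation G r D' ∧ D < D' := by
  classical
  rw [isBridge_iff, not_not] at hB
  obtain ⟨_, c, hc, he⟩ := adj_and_reachable_delete_edges_iff_exists_cycle.mp ⟨hab, hB⟩
  have ha' := c.fst_mem_support_of_mem_edges he
  exact ⟨_, hD.extendAlong (hc.isTrail.rotate ha') ha ha,
    lt_extendAlong ((c.rotate_edges a ha').mem_iff.mpr he) hnab hnba⟩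

theorem Connected.exists_isOrientation_stronglyConnected [Finite V] (hG : G.Connected)
    (hB : ∀ e, ¬ G.IsBridge e) : ∃ R, IsOrientation G R ∧ StronglyConnected R := by
  obtain ⟨r⟩ := hG.nonempty
  obtain ⟨D, hmax⟩ := (Set.toFinite {D | IsStrongPartialOrientation G r D}).exists_maximal
    ⟨⊥, isStrongPartialOrientation_bot⟩
  have hD : IsStrongPartialOrientation G r D := hmax.prop
  have hcov : ∀ a ∈ strongComponent D r, ∀ b, G.Adj a b → D a b ∨ D b a := by
    intro a ha b hab
    by_contra! h
    obtain ⟨D', hD', hlt⟩ := hD.exists_gt hab (hB _) ha h.1 h.2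
    exact hmax.not_gt hD' hlt
  have hall : ∀ v, v ∈ strongComponent D r :=
    hG.preconnected.mem_of_adj_closed ⟨.refl, .refl⟩ fun x y hxy hx =>
      (hcov x hx y hxy).elim (hD.mem_strongComponent _ _ · |>.2) (hD.mem_strongComponent _ _ · |>.1)
  exact ⟨D, ⟨hD.adj, fun u v huv => ⟨hD.asymm u v, (hcov u (hall u) v huv).resolve_right⟩⟩,
    fun u v => (hall u).2.trans (hall v).1⟩

end Orienting

end SimpleGraph

theorem stmt_0 {V : Type*} [Fintype V] (G : SimpleGraph V) (hc : G.Connected) :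
    (∃ R : V → V → Prop, IsOrientation G R ∧ StronglyConnected R) ↔
      ∀ e : Sym2 V, ¬ G.IsBridge e := by
  refine ⟨?_, hc.exists_isOrientation_stronglyConnected⟩
  rintro ⟨R, ⟨hR, hRG⟩, hstrong⟩ e
  induction e using Sym2.ind with | _ x y => ?_
  by_cases hyx : R y x
  · rw [Sym2.eq_swap]
    exact not_isBridge_of_reflTransGen hR ((hRG y x (hR y x hyx)).mp hyx) (hstrong x y)
  · exact not_isBridge_of_reflTransGen hR hyx (hstrong y x)
end

section
/- For integers n and d with 5 ≤ d ≤ n - 2, the graph G_{n,d} is bridgeless. -/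
/-! Being 2-edge-reachable is an equivalence relation, and an adjacent pair is 2-edge-reachable
as soon as its endpoints stay connected once their edge is deleted. Each path edge `u_i u_{i+1}`
and each edge `u_1 c` to a clique vertex `c` lies on the cycle `u_1 ⋯ u_d c u_1`, and `u_3'`
closes the triangle `u_2 u_3 u_3'`. Chaining these, every vertex is 2-edge-reachable from `u_1`,
so `G_{n,d}` is 2-edge-connected, hence bridgeless. -/

open SimpleGraph

namespace SimpleGraph

variable {V : Type*} {G : SimpleGraph V}

theorem IsEdgeConnected.bridgeless [Nonempty V] (h : G.IsEdgeConnected 2) : Bridgeless G :=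
  ⟨h.connected two_ne_zero, fun e => e.ind fun u v hb => hb.not_isEdgeReachable_two (h u v)⟩

theorem Adj.isEdgeReachable_two_of_reachable_deleteEdges {u v : V} (huv : G.Adj u v)
    (h : (G.deleteEdges {s(u, v)}).Reachable u v) : G.IsEdgeReachable 2 u v :=
  not_not.mp fun hn => (isBridge_iff_not_isEdgeReachable_two huv).mpr hn h

theorem reachable_of_adj_succ (f : ℕ → V) {a b : ℕ} (hab : a ≤ b)
    (h : ∀ i ∈ Set.Ico a b, G.Adj (f i) (f (i + 1))) : G.Reachable (f a) (f b) :=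
  (reachable_iff_reflTransGen _ _).mpr <|
    (reflTransGen_of_succ_of_le (fun i j => G.Adj (f i) (f j)) h hab).lift f fun _ _ => id

theorem isEdgeReachable_of_succ {k : ℕ} (f : ℕ → V) {a b : ℕ} (hab : a ≤ b)
    (h : ∀ i ∈ Set.Ico a b, G.IsEdgeReachable k (f i) (f (i + 1))) :
    G.IsEdgeReachable k (f a) (f b) := by
  have chain := reflTransGen_of_succ_of_le (fun i j => G.IsEdgeReachable k (f i) (f j)) h hab
  clear h hab
  induction chain with
  | refl => rfl
  | tail _ hstep ih => exact ih.trans hstep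

end SimpleGraph

/-- The vertex of index `k`, clamped to `n - 1` so that `vtx n` is a total function on `ℕ`. -/
def vtx (n : ℕ) [NeZero n] (k : ℕ) : Fin n :=
  ⟨min k (n - 1), by have := NeZero.pos n; omega⟩

section Gnd

variable {n d : ℕ} [NeZero n]

@[simp] theorem val_vtx (k : ℕ) : (vtx n k : ℕ) = min k (n - 1) := rfl

theorem vtx_val (v : Fin n) : vtx n v = v := Fin.ext <| by simp only [val_vtx]; omega

theorem gnd_isEdgeReachable_two_succ (hdn : d + 2 ≤ n) {i : ℕ} (hi : i + 1 < d) :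
    (Gnd n d).IsEdgeReachable 2 (vtx n i) (vtx n (i + 1)) := by
  -- detour `i → ⋯ → 0 → d → d - 1 → ⋯ → i + 1` through the clique vertex `d`
  refine Adj.isEdgeReachable_two_of_reachable_deleteEdges ?_ <|
    (reachable_of_adj_succ (vtx n) (Nat.zero_le i) ?_).symm.trans <|
    (Adj.reachable (v := vtx n d) ?_).trans <| (Adj.reachable ?_).symm.trans <|
    (reachable_of_adj_succ (vtx n) (b := d - 1) (by omega) ?_).symm
  all_goals
    intros
    simp only [deleteEdges_adj, Set.mem_singleton_iff, Sym2.eq_iff, Gnd, fromRel_adj, ne_eq,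
      Fin.ext_iff, val_vtx, Set.mem_Ico] at *
    omega

theorem gnd_isEdgeReachable_two_zero_clique (hd : 2 ≤ d) {c : ℕ} (hc : d ≤ c) (hcn : c < n - 1) :
    (Gnd n d).IsEdgeReachable 2 (vtx n 0) (vtx n c) := by
  refine Adj.isEdgeReachable_two_of_reachable_deleteEdges ?_ <|
    (reachable_of_adj_succ (vtx n) (b := d - 1) (Nat.zero_le _) ?_).trans (Adj.reachable ?_)
  all_goals
    intros
    simp only [deleteEdges_adj, Set.mem_singleton_iff, Sym2.eq_iff, Gnd, fromRel_adj, ne_eq,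
      Fin.ext_iff, val_vtx, Set.mem_Ico] at *
    omega

theorem gnd_isEdgeReachable_two_one_last (hd : 3 ≤ d) (hdn : d + 2 ≤ n) :
    (Gnd n d).IsEdgeReachable 2 (vtx n 1) (vtx n (n - 1)) := by
  refine Adj.isEdgeReachable_two_of_reachable_deleteEdges ?_ <|
    (Adj.reachable (v := vtx n 2) ?_).trans (Adj.reachable ?_)
  all_goals
    simp only [deleteEdges_adj, Set.mem_singleton_iff, Sym2.eq_iff, Gnd, fromRel_adj, ne_eq,
      Fin.ext_iff, val_vtx]
    omega

theorem gnd_isEdgeConnected_two (hd : 3 ≤ d) (hdn : d + 2 ≤ n) :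
    (Gnd n d).IsEdgeConnected 2 := by
  have along_path {i : ℕ} (hi : i < d) : (Gnd n d).IsEdgeReachable 2 (vtx n 0) (vtx n i) :=
    isEdgeReachable_of_succ (vtx n) (Nat.zero_le i) fun j hj =>
      gnd_isEdgeReachable_two_succ hdn (by simp only [Set.mem_Ico] at hj; omega)
  have from_zero (v : Fin n) : (Gnd n d).IsEdgeReachable 2 (vtx n 0) v := by
    rw [← vtx_val v]
    rcases lt_or_ge (v : ℕ) d with hv | hv
    · exact along_path hv
    rcases lt_or_ge (v : ℕ) (n - 1) with hv' | hv'
    · exact gnd_isEdgeReachable_two_zero_clique (by omega) hv hv'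
    · rw [show (v : ℕ) = n - 1 by omega]
      exact (along_path (by omega)).trans (gnd_isEdgeReachable_two_one_last hd hdn)
  exact fun u v => (from_zero u).symm.trans (from_zero v)

end Gnd

theorem stmt_3 (n d : ℕ) (hd : 5 ≤ d) (hdn : d + 2 ≤ n) :
    Bridgeless (Gnd n d) :=
  haveI : NeZero n := ⟨by omega⟩
  (gnd_isEdgeConnected_two (by omega) hdn).bridgeless
end

section
/- For every n ≥ 5, there exists a bridgeless graph of order n with n + 2 edges that has no orientation of diameter at most n - 2. -/
open SimpleGraph

/-!
`Hgraph n` is `K₄` with one edge subdivided into a path of length `n - 3`; relabelled as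
`subdividedK4 n`, the path is `0 – 1 – ⋯ – (n - 3)` and the two other vertices `y`, `z` are
adjacent to each other and to both ends of it. In an orientation of diameter at most `n - 2`
every vertex has an arc in and an arc out, so each inner vertex of the path, having degree two,
passes the direction on: the whole path is directed, and after reversing all arcs we may assume
it runs from `0` to `n - 3`. A walk that enters the inside of the path must then run along it to
its end, which costs `n - 4` steps. Hence `n - 3` reaches `0`, `y` and `z` within two steps,
and each of these reaches `0` within two steps. So there is a shortcut `n - 3 → y → 0`, and whichever way the edges from `z`
to the ends of the path point, some vertex is left with a single way in or out, which forces a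
walk of length `n - 1`.
-/

section Digraph

variable {V W : Type*} {R : V → V → Prop}

lemma relPow_succ' {k : ℕ} {u v : V} : RelPow R (k + 1) u v ↔ ∃ w, RelPow R k u w ∧ R w v := by
  induction k generalizing u with
  | zero => simp [RelPow]
  | succ k ih =>
    constructor
    · rintro ⟨w, huw, hwv⟩
      obtain ⟨x, hwx, hxv⟩ := ih.mp hwv
      exact ⟨x, ⟨w, huw, hwx⟩, hxv⟩
    · rintro ⟨x, ⟨w, huw, hwx⟩, hxv⟩
      exact ⟨w, huw, ih.mpr ⟨x, hwx, hxv⟩⟩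

lemma relPow_flip {k : ℕ} {u v : V} : RelPow (flip R) k u v ↔ RelPow R k v u := by
  induction k generalizing u v with
  | zero => exact eq_comm
  | succ k ih =>
    rw [relPow_succ']
    exact exists_congr fun w => by rw [ih]; exact and_comm

lemma RelPow.comap (e : V ≃ W) {R : W → W → Prop} {k : ℕ} {u v : V}
    (h : RelPow R k (e u) (e v)) : RelPow (fun x y => R (e x) (e y)) k u v := by
  induction k generalizing u with
  | zero => exact e.injective h
  | succ k ih =>
    obtain ⟨w, huw, hwv⟩ := h
    exact ⟨e.symm w, by simpa using huw, ih (by simpa using hwv)⟩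

lemma RelPow.forced_prefix {p : ℕ → V} {v : V} :
    ∀ {m k : ℕ}, (∀ i < m, ∀ w, R (p i) w → w = p (i + 1)) → (∀ i < m, p i ≠ v) →
      RelPow R k (p 0) v → m ≤ k ∧ RelPow R (k - m) (p m) v := by
  intro m
  induction m generalizing p with
  | zero => intro k _ _ h; simpa using h
  | succ m ih =>
    intro k hp hv h
    cases k with
    | zero => exact absurd h (hv 0 m.succ_pos)
    | succ k =>
      obtain ⟨w, hw, hwv⟩ := h
      obtain rfl := hp 0 m.succ_pos w hw
      have := ih (p := fun i => p (i + 1)) (fun i hi => hp (i + 1) (by omega))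
        (fun i hi => hv (i + 1) (by omega)) hwv
      exact ⟨by omega, by simpa using this.2⟩

lemma RelPow.of_forall_rel_eq {u u' v : V} {k : ℕ} (hu : ∀ w, R u w → w = u') (huv : u ≠ v)
    (h : RelPow R k u v) : 1 ≤ k ∧ RelPow R (k - 1) u' v := by
  cases k with
  | zero => exact absurd h huv
  | succ k =>
    obtain ⟨w, huw, hwv⟩ := h
    exact ⟨k.succ_pos, hu w huw ▸ hwv⟩

lemma RelPow.of_forall_rel_eq' {u v v' : V} {k : ℕ} (hv : ∀ w, R w v → w = v') (huv : u ≠ v)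
    (h : RelPow R k u v) : 1 ≤ k ∧ RelPow R (k - 1) u v' := by
  cases k with
  | zero => exact absurd h huv
  | succ k =>
    obtain ⟨w, huw, hwv⟩ := relPow_succ'.mp h
    exact ⟨k.succ_pos, hv w hwv ▸ huw⟩

lemma RelPow.eq_or_rel {u v : V} {k : ℕ} (h : RelPow R k u v) (hk : k ≤ 1) : u = v ∨ R u v := by
  interval_cases k <;> simp_all [RelPow]

lemma RelPow.eq_or_rel_or_exists {u v : V} {k : ℕ} (h : RelPow R k u v) (hk : k ≤ 2) :
    u = v ∨ R u v ∨ ∃ w, R u w ∧ R w v := by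
  interval_cases k <;> simp_all [RelPow]

lemma DiamLE.flip {d : ℕ} (h : DiamLE R d) : DiamLE (flip R) d := fun u v =>
  let ⟨k, hk, hvu⟩ := h v u
  ⟨k, hk, relPow_flip.mpr hvu⟩

lemma DiamLE.comap (e : V ≃ W) {R : W → W → Prop} {d : ℕ} (h : DiamLE R d) :
    DiamLE (fun x y => R (e x) (e y)) d := fun u v =>
  let ⟨k, hk, huv⟩ := h (e u) (e v)
  ⟨k, hk, huv.comap e⟩

lemma DiamLE.exists_rel {d : ℕ} (h : DiamLE R d) {u v : V} (huv : u ≠ v) : ∃ w, R u w := by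
  obtain ⟨k, -, hk⟩ := h u v
  cases k with
  | zero => exact absurd hk huv
  | succ k =>
    obtain ⟨w, huw, -⟩ := hk
    exact ⟨w, huw⟩

namespace IsOrientation

variable {G : SimpleGraph V}

lemma asymm (hR : IsOrientation G R) {u v : V} (h : R u v) : ¬R v u :=
  (hR.2 u v (hR.1 u v h)).mp h

lemma rel_or_rel (hR : IsOrientation G R) {u v : V} (h : G.Adj u v) : R u v ∨ R v u := by
  by_cases huv : R u v
  · exact .inl huv
  · exact .inr (by simpa [huv] using hR.2 v u h.symm)

lemma flip (hR : IsOrientation G R) : IsOrientation G (flip R) :=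
  ⟨fun u v h => (hR.1 v u h).symm, fun u v h => hR.2 v u h.symm⟩

lemma comap {G' : SimpleGraph W} {R : W → W → Prop} (e : G ≃g G') (hR : IsOrientation G' R) :
    IsOrientation G (fun x y => R (e x) (e y)) :=
  ⟨fun _ _ h => e.map_adj_iff.mp (hR.1 _ _ h), fun _ _ h => hR.2 _ _ (e.map_adj_iff.mpr h)⟩

lemma eq_of_rel (hR : IsOrientation G R) {u u' w : V} (hu : ∀ x, G.Adj u x → x = u' ∨ R x u)
    (h : R u w) : w = u' :=
  (hu w (hR.1 u w h)).resolve_right (hR.asymm h)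

end IsOrientation

end Digraph

lemma SimpleGraph.Connected.forall_not_isBridge {V : Type*} {G : SimpleGraph V} (hG : G.Connected)
    (h : ∀ u v, G.Adj u v → (G.deleteEdges {s(u, v)}).Reachable u v) (e : Sym2 V) :
    ¬G.IsBridge e := by
  induction e using Sym2.ind with
  | _ u v =>
    rw [isBridge_iff, not_not]
    by_cases huv : G.Adj u v
    · exact h u v huv
    · rw [deleteEdges_eq_self.mpr (Set.disjoint_singleton_right.mpr huv)]
      exact hG.preconnected u v

lemma SimpleGraph.reachable_of_adj_succ_s7 {n : ℕ} {G : SimpleGraph (Fin n)} {a b : ℕ}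
    (hab : a ≤ b) (hb : b < n)
    (h : ∀ k (hk : k < b), a ≤ k → G.Adj ⟨k, by omega⟩ ⟨k + 1, by omega⟩) :
    G.Reachable ⟨a, by omega⟩ ⟨b, hb⟩ := by
  obtain ⟨d, rfl⟩ := Nat.exists_eq_add_of_le hab
  induction d with
  | zero => rfl
  | succ d ih =>
    exact (ih (by omega) (by omega) fun k hk hak => h k (by omega) hak).trans
      (h (a + d) (by omega) (by omega)).reachable

section Hgraph

variable {n : ℕ}

lemma hgraph_adj (hn : 5 ≤ n) {i j : Fin n} :
    (Hgraph n).Adj i j ↔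
      ((i : ℕ) + 1 = j ∧ (j : ℕ) ≤ n - 2) ∨ ((j : ℕ) + 1 = i ∧ (i : ℕ) ≤ n - 2) ∨
      ((i : ℕ) = 0 ∧ (j : ℕ) = n - 2) ∨ ((j : ℕ) = 0 ∧ (i : ℕ) = n - 2) ∨
      ((i : ℕ) = n - 1 ∧ ((j : ℕ) = 1 ∨ (j : ℕ) = 2 ∨ (j : ℕ) = 3)) ∨
      ((j : ℕ) = n - 1 ∧ ((i : ℕ) = 1 ∨ (i : ℕ) = 2 ∨ (i : ℕ) = 3)) := by
  rw [Hgraph, fromRel_adj, Fin.ne_iff_vne]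
  omega

lemma hgraph_connected (hn : 5 ≤ n) : (Hgraph n).Connected := by
  have hroot : ∀ v : Fin n, (Hgraph n).Reachable ⟨0, by omega⟩ v := by
    intro v
    have hcycle : ∀ b (hb : b ≤ n - 2), (Hgraph n).Reachable ⟨0, by omega⟩ ⟨b, by omega⟩ :=
      fun b hb => reachable_of_adj_succ_s7 (Nat.zero_le b) (by omega) fun k hk _ => by
        simp only [hgraph_adj hn, true_and]; omega
    by_cases hv : (v : ℕ) ≤ n - 2
    · exact hcycle v hv
    · have hx : (Hgraph n).Adj ⟨1, by omega⟩ v := by rw [hgraph_adj hn]; dsimp only; omega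
      exact (hcycle 1 (by omega)).trans hx.reachable
  exact (connected_iff_exists_forall_reachable _).mpr ⟨_, hroot⟩

lemma hgraph_reachable_deleteEdges (hn : 5 ≤ n) {u v : Fin n}
    (huv : ((u : ℕ) + 1 = v ∧ (v : ℕ) ≤ n - 2) ∨ ((u : ℕ) = 0 ∧ (v : ℕ) = n - 2) ∨
      ((u : ℕ) = n - 1 ∧ ((v : ℕ) = 1 ∨ (v : ℕ) = 2 ∨ (v : ℕ) = 3))) :
    ((Hgraph n).deleteEdges {s(u, v)}).Reachable u v := by
  set G := (Hgraph n).deleteEdges {s(u, v)}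
  have hG : ∀ x y : Fin n, (Hgraph n).Adj x y →
      ¬(((x : ℕ) = u ∧ (y : ℕ) = v) ∨ ((x : ℕ) = v ∧ (y : ℕ) = u)) → G.Adj x y := by
    intro x y hxy hne
    refine (deleteEdges_adj ..).mpr ⟨hxy, fun he => hne ?_⟩
    simp only [Set.mem_singleton_iff, Sym2.eq_iff, Fin.ext_iff] at he
    exact he
  have hchain : ∀ a b (hab : a ≤ b) (hb : b ≤ n - 2), (∀ k, a ≤ k → k < b →
      ¬((k = u ∧ k + 1 = (v : ℕ)) ∨ (k = v ∧ k + 1 = (u : ℕ)))) →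
      G.Reachable ⟨a, by omega⟩ ⟨b, by omega⟩ := fun a b hab hb hk =>
    reachable_of_adj_succ_s7 hab (by omega) fun k hkb hak =>
      hG _ _ (by simp only [hgraph_adj hn, true_and]; omega) (hk k hak hkb)
  rcases huv with ⟨huv, hv⟩ | ⟨hu, hv⟩ | ⟨hu, hv⟩
  · -- the rest of the cycle `v → ⋯ → n - 2 → 0 → ⋯ → u`
    have hwrap : G.Adj ⟨0, by omega⟩ ⟨n - 2, by omega⟩ :=
      hG _ _ (by simp [hgraph_adj hn]) (by dsimp only; omega)
    exact ((hchain 0 u (by omega) (by omega) fun k _ hk => by omega).symm.trans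
      hwrap.reachable).trans (hchain v (n - 2) hv le_rfl fun k hk _ => by omega).symm
  · convert hchain 0 (n - 2) (by omega) le_rfl (by omega) using 2
  · obtain ⟨w, hw⟩ : ∃ w : Fin n, ((w : ℕ) = 1 ∧ (v : ℕ) = 2) ∨
        ((w : ℕ) = 2 ∧ ((v : ℕ) = 1 ∨ (v : ℕ) = 3)) := by
      by_cases hv₂ : (v : ℕ) = 2
      exacts [⟨⟨1, by omega⟩, .inl ⟨rfl, hv₂⟩⟩, ⟨⟨2, by omega⟩, .inr ⟨rfl, by omega⟩⟩]
    exact (hG u w (by simp only [hgraph_adj hn]; omega) (by omega)).reachable.trans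
      (hG w v (by simp only [hgraph_adj hn]; omega) (by omega)).reachable

lemma hgraph_bridgeless (hn : 5 ≤ n) : Bridgeless (Hgraph n) := by
  refine ⟨hgraph_connected hn, (hgraph_connected hn).forall_not_isBridge fun u v huv => ?_⟩
  rw [Hgraph, fromRel_adj] at huv
  rcases huv.2 with h | h
  · exact hgraph_reachable_deleteEdges hn h
  · rw [Sym2.eq_swap]
    exact (hgraph_reachable_deleteEdges hn h).symm

lemma hgraph_edgeSet_ncard (hn : 5 ≤ n) : (Hgraph n).edgeSet.ncard = n + 2 := by
  let e : Fin (n + 2) → Sym2 (Fin n) := fun k =>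
    if h : (k : ℕ) < n - 2 then s(⟨k, by omega⟩, ⟨k + 1, by omega⟩)
    else if (k : ℕ) = n - 2 then s(⟨0, by omega⟩, ⟨n - 2, by omega⟩)
    else s(⟨n - 1, by omega⟩, ⟨k + 2 - n, by omega⟩)
  have he : Function.Injective e := by
    intro j k hjk
    ext
    simp only [e] at hjk
    split_ifs at hjk <;> simp only [Sym2.eq_iff, Fin.ext_iff] at hjk <;> omega
  have hrange : Set.range e = (Hgraph n).edgeSet := by
    ext x
    induction x using Sym2.ind with
    | _ u v =>
      rw [mem_edgeSet, hgraph_adj hn]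
      constructor
      · rintro ⟨k, hk⟩
        simp only [e] at hk
        split_ifs at hk <;> simp only [Sym2.eq_iff, Fin.ext_iff] at hk <;> omega
      · intro h
        refine ⟨⟨if (u : ℕ) = n - 1 then v + n - 2 else if (v : ℕ) = n - 1 then u + n - 2
          else if (u : ℕ) + v = n - 2 ∧ ((u : ℕ) = 0 ∨ (v : ℕ) = 0) then n - 2 else min u v,
          by split_ifs <;> omega⟩, ?_⟩
        simp only [e]
        split_ifs <;> simp only [Sym2.eq_iff, Fin.ext_iff] <;> omega
  rw [← hrange, Set.ncard_range_of_injective he, Nat.card_eq_fintype_card, Fintype.card_fin]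

end Hgraph

/-- `K₄` on `{0, n - 3, n - 2, n - 1}` with its edge `{0, n - 3}` subdivided into the path
`0 – 1 – ⋯ – (n - 3)`. -/
def subdividedK4 (n : ℕ) : SimpleGraph (Fin n) :=
  SimpleGraph.fromRel fun i j =>
    ((i : ℕ) + 1 = j ∧ (j : ℕ) ≤ n - 3) ∨ (((i : ℕ) = 0 ∨ (i : ℕ) = n - 3) ∧ n - 2 ≤ (j : ℕ)) ∨
      ((i : ℕ) = n - 2 ∧ (j : ℕ) = n - 1)

lemma subdividedK4_adj {n : ℕ} (hn : 3 ≤ n) {i j : Fin n} :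
    (subdividedK4 n).Adj i j ↔
      ((i : ℕ) + 1 = j ∧ (j : ℕ) ≤ n - 3) ∨ ((j : ℕ) + 1 = i ∧ (i : ℕ) ≤ n - 3) ∨
      (((i : ℕ) = 0 ∨ (i : ℕ) = n - 3) ∧ n - 2 ≤ (j : ℕ)) ∨
      (((j : ℕ) = 0 ∨ (j : ℕ) = n - 3) ∧ n - 2 ≤ (i : ℕ)) ∨
      (n - 2 ≤ (i : ℕ) ∧ n - 2 ≤ (j : ℕ) ∧ (i : ℕ) ≠ j) := by
  rw [subdividedK4, fromRel_adj, Fin.ne_iff_vne]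
  omega

/-- Path vertex `i` goes to the cycle vertex `i + 3 (mod n - 1)`, the vertices `n - 2` and `n - 1`
to `2` and `n - 1`. -/
def subdividedK4IsoHgraph {n : ℕ} (hn : 5 ≤ n) : subdividedK4 n ≃g Hgraph n where
  toFun i := ⟨if (i : ℕ) < n - 4 then (i : ℕ) + 3 else if (i : ℕ) < n - 1 then (i : ℕ) + 4 - n
    else n - 1, by split_ifs <;> omega⟩
  invFun v := ⟨if (v : ℕ) < 3 then (v : ℕ) + n - 4 else if (v : ℕ) < n - 1 then (v : ℕ) - 3
    else n - 1, by split_ifs <;> omega⟩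
  left_inv i := by ext; simp only; split_ifs <;> omega
  right_inv v := by ext; simp only; split_ifs <;> omega
  map_rel_iff' {i j} := by
    obtain ⟨m, rfl⟩ : ∃ m, n = m + 5 := ⟨n - 5, by omega⟩
    simp only [Equiv.coe_fn_mk, Hgraph, fromRel_adj, subdividedK4_adj (by omega : 3 ≤ m + 5),
      ne_eq, Fin.ext_iff, Nat.reduceSubDiff]
    split_ifs <;> (try simp only [false_and, false_or, true_and]) <;> omega

section SubdividedK4

variable {n : ℕ}

lemma subdividedK4_adj_interior (hn : 5 ≤ n) {u x : Fin n} (hu₁ : 1 ≤ (u : ℕ))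
    (hu₂ : (u : ℕ) ≤ n - 4) (h : (subdividedK4 n).Adj u x) :
    (x : ℕ) + 1 = u ∨ (u : ℕ) + 1 = x := by
  rw [subdividedK4_adj (by omega)] at h
  omega

lemma subdividedK4_adj_start (hn : 5 ≤ n) {x y z : Fin n} (hy : n - 2 ≤ (y : ℕ))
    (hz : n - 2 ≤ (z : ℕ)) (hyz : y ≠ z) (h : (subdividedK4 n).Adj ⟨0, by omega⟩ x) :
    x = ⟨1, by omega⟩ ∨ x = y ∨ x = z := by
  have := Fin.val_ne_of_ne hyz
  have := x.isLt
  simp only [subdividedK4_adj (by omega : 3 ≤ n), Fin.ext_iff] at h ⊢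
  omega

lemma subdividedK4_adj_end (hn : 5 ≤ n) {x y z : Fin n} (hy : n - 2 ≤ (y : ℕ))
    (hz : n - 2 ≤ (z : ℕ)) (hyz : y ≠ z) (h : (subdividedK4 n).Adj ⟨n - 3, by omega⟩ x) :
    x = ⟨n - 4, by omega⟩ ∨ x = y ∨ x = z := by
  have := Fin.val_ne_of_ne hyz
  have := x.isLt
  simp only [subdividedK4_adj (by omega : 3 ≤ n), Fin.ext_iff] at h ⊢
  omega

lemma subdividedK4_adj_top (hn : 5 ≤ n) {x y z : Fin n} (hy : n - 2 ≤ (y : ℕ))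
    (hz : n - 2 ≤ (z : ℕ)) (hyz : y ≠ z) (h : (subdividedK4 n).Adj z x) :
    x = ⟨0, by omega⟩ ∨ x = ⟨n - 3, by omega⟩ ∨ x = y := by
  have := Fin.val_ne_of_ne hyz
  have := x.isLt
  simp only [subdividedK4_adj (by omega : 3 ≤ n), Fin.ext_iff] at h ⊢
  omega

lemma subdividedK4_not_adj_start_end (hn : 5 ≤ n) :
    ¬(subdividedK4 n).Adj ⟨0, by omega⟩ ⟨n - 3, by omega⟩ := by
  simp only [subdividedK4_adj (by omega : 3 ≤ n)]
  omega

end SubdividedK4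

structure ShortForwardOrientation (n : ℕ) (R : Fin n → Fin n → Prop) : Prop where
  isOrientation : IsOrientation (subdividedK4 n) R
  diamLE : DiamLE R (n - 2)
  rel_succ : ∀ u v : Fin n, (u : ℕ) + 1 = v → (v : ℕ) ≤ n - 3 → R u v

namespace ShortForwardOrientation

variable {n : ℕ} {R : Fin n → Fin n → Prop}

lemma of_rel_zero_one (hn : 5 ≤ n) (hR : IsOrientation (subdividedK4 n) R)
    (hd : DiamLE R (n - 2)) (h01 : R ⟨0, by omega⟩ ⟨1, by omega⟩) :
    ShortForwardOrientation n R := by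
  have key : ∀ i (hi : i + 1 ≤ n - 3), R ⟨i, by omega⟩ ⟨i + 1, by omega⟩ := by
    intro i
    induction i with
    | zero => exact fun _ => h01
    | succ i ih =>
      intro hi
      obtain ⟨w, hw⟩ := hd.exists_rel (u := ⟨i + 1, by omega⟩) (v := ⟨0, by omega⟩)
        (by simp [Fin.ext_iff])
      -- the path vertex `i + 1` has degree two and its edge to `i` points into it
      suffices w = ⟨i + 2, by omega⟩ from this ▸ hw
      refine hR.eq_of_rel (fun x hx => ?_) hw
      rcases subdividedK4_adj_interior hn (by simp) (by simp; omega) hx with h | h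
      · rw [show x = ⟨i, by omega⟩ from Fin.ext (by simp at h ⊢; omega)]
        exact .inr (ih (by omega))
      · exact .inl (Fin.ext (by simp at h ⊢; omega))
  refine ⟨hR, hd, fun u v huv hv => ?_⟩
  convert key u (by omega)
  exact huv.symm

lemma rel_of_interior (hF : ShortForwardOrientation n R) (hn : 5 ≤ n) {u w : Fin n}
    (hu₁ : 1 ≤ (u : ℕ)) (hu₂ : (u : ℕ) ≤ n - 4) (h : R u w) : (u : ℕ) + 1 = w := by
  rcases subdividedK4_adj_interior hn hu₁ hu₂ (hF.isOrientation.1 _ _ h) with h' | h'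
  · exact absurd (hF.rel_succ w u h' (by omega)) (hF.isOrientation.asymm h)
  · exact h'

lemma rel_to_interior (hF : ShortForwardOrientation n R) (hn : 5 ≤ n) {u w : Fin n}
    (hu₁ : 1 ≤ (u : ℕ)) (hu₂ : (u : ℕ) ≤ n - 4) (h : R w u) : (w : ℕ) + 1 = u := by
  rcases subdividedK4_adj_interior hn hu₁ hu₂ (hF.isOrientation.1 _ _ h).symm with h' | h'
  · exact h'
  · exact absurd (hF.rel_succ u w h' (by omega)) (hF.isOrientation.asymm h)

lemma relPow_from_one (hF : ShortForwardOrientation n R) (hn : 5 ≤ n) {v : Fin n}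
    (hv : (v : ℕ) = 0 ∨ n - 3 ≤ (v : ℕ)) {k : ℕ} (h : RelPow R k ⟨1, by omega⟩ v) :
    n - 4 ≤ k ∧ RelPow R (k - (n - 4)) ⟨n - 3, by omega⟩ v := by
  let p : ℕ → Fin n := fun i => ⟨min (i + 1) (n - 1), by omega⟩
  have hforced : ∀ i < n - 4, ∀ w, R (p i) w → w = p (i + 1) := by
    intro i hi w hw
    have := hF.rel_of_interior hn (u := p i) (by simp [p]; omega) (by simp [p]; omega) hw
    exact Fin.ext (by simp [p] at this ⊢; omega)
  have hp0 : p 0 = ⟨1, by omega⟩ := Fin.ext (by simp [p]; omega)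
  have hpm : p (n - 4) = ⟨n - 3, by omega⟩ := Fin.ext (by simp [p]; omega)
  rw [← hp0] at h
  rw [← hpm]
  exact RelPow.forced_prefix hforced (fun i hi => by simp [p, Fin.ext_iff]; omega) h

lemma relPow_to_pred_end (hF : ShortForwardOrientation n R) (hn : 5 ≤ n) {v : Fin n}
    (hv : (v : ℕ) = 0 ∨ n - 3 ≤ (v : ℕ)) {k : ℕ} (h : RelPow R k v ⟨n - 4, by omega⟩) :
    n - 4 ≤ k ∧ RelPow R (k - (n - 4)) v ⟨0, by omega⟩ := by
  let p : ℕ → Fin n := fun i => ⟨n - 4 - i, by omega⟩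
  have hforced : ∀ i < n - 4, ∀ w, flip R (p i) w → w = p (i + 1) := by
    intro i hi w hw
    have := hF.rel_to_interior hn (u := p i) (by simp [p]; omega) (by simp [p]) hw
    exact Fin.ext (by simp [p] at this ⊢; omega)
  have hpm : p (n - 4) = ⟨0, by omega⟩ := Fin.ext (by simp [p])
  rw [← relPow_flip] at h ⊢
  rw [← hpm]
  exact RelPow.forced_prefix (p := p) hforced (fun i hi => by simp [p, Fin.ext_iff]; omega) h

lemma exists_relPow_from_end (hF : ShortForwardOrientation n R) (hn : 5 ≤ n) {v : Fin n}
    (hv : (v : ℕ) = 0 ∨ n - 3 ≤ (v : ℕ)) : ∃ j ≤ 2, RelPow R j ⟨n - 3, by omega⟩ v := by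
  obtain ⟨k, hk, h⟩ := hF.diamLE ⟨1, by omega⟩ v
  obtain ⟨-, h⟩ := hF.relPow_from_one hn hv h
  exact ⟨_, by omega, h⟩

lemma exists_relPow_to_start (hF : ShortForwardOrientation n R) (hn : 5 ≤ n) {v : Fin n}
    (hv : (v : ℕ) = 0 ∨ n - 3 ≤ (v : ℕ)) : ∃ j ≤ 2, RelPow R j v ⟨0, by omega⟩ := by
  obtain ⟨k, hk, h⟩ := hF.diamLE v ⟨n - 4, by omega⟩
  obtain ⟨-, h⟩ := hF.relPow_to_pred_end hn hv h
  exact ⟨_, by omega, h⟩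

variable {y z : Fin n}

lemma exists_shortcut (hF : ShortForwardOrientation n R) (hn : 5 ≤ n) :
    ∃ y : Fin n, n - 2 ≤ (y : ℕ) ∧ R ⟨n - 3, by omega⟩ y ∧ R y ⟨0, by omega⟩ := by
  obtain ⟨j, hj, h⟩ := hF.exists_relPow_from_end hn (v := ⟨0, by omega⟩) (.inl rfl)
  rcases h.eq_or_rel_or_exists hj with h | h | ⟨u, hau, hub⟩
  · simp [Fin.ext_iff] at h
    omega
  · exact absurd (hF.isOrientation.1 _ _ h).symm (subdividedK4_not_adj_start_end hn)
  · refine ⟨u, ?_, hau, hub⟩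
    have h₁ := hF.isOrientation.1 _ _ hau
    have h₂ := hF.isOrientation.1 _ _ hub
    simp only [subdividedK4_adj (by omega : 3 ≤ n)] at h₁ h₂
    by_contra hu
    -- otherwise `n = 5` and `u` is the path vertex `1 = n - 4`, entered from `n - 3`
    exact hF.isOrientation.asymm hau (hF.rel_succ u _ (by dsimp only; omega) (by dsimp only; omega))

lemma eq_one_of_rel_start (hF : ShortForwardOrientation n R) (hn : 5 ≤ n)
    (hy : n - 2 ≤ (y : ℕ)) (hz : n - 2 ≤ (z : ℕ)) (hyz : y ≠ z) (hyb : R y ⟨0, by omega⟩)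
    (hzb : R z ⟨0, by omega⟩) {w : Fin n} (h : R ⟨0, by omega⟩ w) : w = ⟨1, by omega⟩ := by
  refine hF.isOrientation.eq_of_rel (fun x hx => ?_) h
  rcases subdividedK4_adj_start hn hy hz hyz hx with rfl | rfl | rfl
  exacts [.inl rfl, .inr hyb, .inr hzb]

lemma not_rel_top_of_rel_start (hF : ShortForwardOrientation n R) (hn : 5 ≤ n)
    (hy : n - 2 ≤ (y : ℕ)) (hz : n - 2 ≤ (z : ℕ)) (hyz : y ≠ z) (hbz : R ⟨0, by omega⟩ z) :
    ¬R y z := by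
  intro hyz'
  have hz_out : ∀ w, R z w → w = ⟨n - 3, by omega⟩ := fun w => hF.isOrientation.eq_of_rel
    fun x hx => by
      rcases subdividedK4_adj_top hn hy hz hyz hx with rfl | rfl | rfl
      exacts [.inr hbz, .inl rfl, .inr hyz']
  obtain ⟨j, hj, h⟩ := hF.exists_relPow_to_start hn (v := z) (.inr (by omega))
  rcases h.eq_or_rel_or_exists hj with h | h | ⟨u, hzu, hub⟩
  · simp [Fin.ext_iff] at h
    omega
  · exact hF.isOrientation.asymm hbz h
  · obtain rfl := hz_out u hzu
    exact subdividedK4_not_adj_start_end hn (hF.isOrientation.1 _ _ hub).symm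

lemma not_rel_top_of_rel_end (hF : ShortForwardOrientation n R) (hn : 5 ≤ n)
    (hy : n - 2 ≤ (y : ℕ)) (hz : n - 2 ≤ (z : ℕ)) (hyz : y ≠ z) (hza : R z ⟨n - 3, by omega⟩) :
    ¬R z y := by
  intro hzy
  have hz_in : ∀ w, R w z → w = ⟨0, by omega⟩ := fun w => hF.isOrientation.flip.eq_of_rel
    fun x hx => by
      rcases subdividedK4_adj_top hn hy hz hyz hx with rfl | rfl | rfl
      exacts [.inl rfl, .inr hza, .inr hzy]
  obtain ⟨j, hj, h⟩ := hF.exists_relPow_from_end hn (v := z) (.inr (by omega))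
  rcases h.eq_or_rel_or_exists hj with h | h | ⟨u, hau, huz⟩
  · simp [Fin.ext_iff] at h
    omega
  · exact hF.isOrientation.asymm hza h
  · obtain rfl := hz_in u huz
    exact subdividedK4_not_adj_start_end hn (hF.isOrientation.1 _ _ hau).symm

lemma not_rel_top_of_rel_end_start (hF : ShortForwardOrientation n R) (hn : 5 ≤ n)
    (hy : n - 2 ≤ (y : ℕ)) (hz : n - 2 ≤ (z : ℕ)) (hyz : y ≠ z) (haz : R ⟨n - 3, by omega⟩ z)
    (hyb : R y ⟨0, by omega⟩) (hzb : R z ⟨0, by omega⟩) : ¬R y z := by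
  intro hyz'
  have hz_out : ∀ w, R z w → w = ⟨0, by omega⟩ := fun w => hF.isOrientation.eq_of_rel
    fun x hx => by
      rcases subdividedK4_adj_top hn hy hz hyz hx with rfl | rfl | rfl
      exacts [.inl rfl, .inr haz, .inr hyz']
  obtain ⟨k, hk, h⟩ := hF.diamLE z y
  obtain ⟨-, h⟩ := h.of_forall_rel_eq hz_out hyz.symm
  obtain ⟨-, h⟩ := h.of_forall_rel_eq (fun w => hF.eq_one_of_rel_start hn hy hz hyz hyb hzb)
    (by simp [Fin.ext_iff]; omega)
  obtain ⟨-, h⟩ := hF.relPow_from_one hn (.inr (by omega)) h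
  rw [show k - 1 - 1 - (n - 4) = 0 by omega] at h
  simp [RelPow, Fin.ext_iff] at h
  omega

lemma not_rel_start_of_rel_end (hF : ShortForwardOrientation n R) (hn : 5 ≤ n)
    (hy : n - 2 ≤ (y : ℕ)) (hz : n - 2 ≤ (z : ℕ)) (hyz : y ≠ z) (hay : R ⟨n - 3, by omega⟩ y)
    (haz : R ⟨n - 3, by omega⟩ z) : ¬R ⟨0, by omega⟩ z := by
  intro hbz
  have ha_in : ∀ w, R w ⟨n - 3, by omega⟩ → w = ⟨n - 4, by omega⟩ := fun w =>
    hF.isOrientation.flip.eq_of_rel fun x hx => by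
      rcases subdividedK4_adj_end hn hy hz hyz hx with rfl | rfl | rfl
      exacts [.inl rfl, .inr hay, .inr haz]
  obtain ⟨k, hk, h⟩ := hF.diamLE z ⟨n - 3, by omega⟩
  obtain ⟨-, h⟩ := h.of_forall_rel_eq' ha_in (by simp [Fin.ext_iff]; omega)
  obtain ⟨-, h⟩ := hF.relPow_to_pred_end hn (.inr (by omega)) h
  rcases h.eq_or_rel (by omega) with h | h
  · simp [Fin.ext_iff] at h
    omega
  · exact hF.isOrientation.asymm hbz h

lemma not_rel_end_of_rel_start (hF : ShortForwardOrientation n R) (hn : 5 ≤ n)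
    (hy : n - 2 ≤ (y : ℕ)) (hz : n - 2 ≤ (z : ℕ)) (hyz : y ≠ z) (hyb : R y ⟨0, by omega⟩)
    (hzb : R z ⟨0, by omega⟩) : ¬R z ⟨n - 3, by omega⟩ := by
  intro hza
  obtain ⟨k, hk, h⟩ := hF.diamLE ⟨0, by omega⟩ z
  obtain ⟨-, h⟩ := h.of_forall_rel_eq (fun w => hF.eq_one_of_rel_start hn hy hz hyz hyb hzb)
    (by simp [Fin.ext_iff]; omega)
  obtain ⟨-, h⟩ := hF.relPow_from_one hn (.inr (by omega)) h
  rcases h.eq_or_rel (by omega) with h | h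
  · simp [Fin.ext_iff] at h
    omega
  · exact hF.isOrientation.asymm hza h

end ShortForwardOrientation

theorem subdividedK4_not_diamLE {n : ℕ} (hn : 5 ≤ n) {R : Fin n → Fin n → Prop}
    (hR : IsOrientation (subdividedK4 n) R) : ¬DiamLE R (n - 2) := by
  intro hd
  wlog h01 : R ⟨0, by omega⟩ ⟨1, by omega⟩ generalizing R
  · have hadj : (subdividedK4 n).Adj ⟨0, by omega⟩ ⟨1, by omega⟩ := by
      simp [subdividedK4_adj (by omega : 3 ≤ n)]; omega
    exact this hR.flip hd.flip ((hR.rel_or_rel hadj).resolve_left h01)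
  have hF := ShortForwardOrientation.of_rel_zero_one hn hR hd h01
  obtain ⟨y, hy, hay, hyb⟩ := hF.exists_shortcut hn
  obtain ⟨z, hz, hyz⟩ : ∃ z : Fin n, n - 2 ≤ (z : ℕ) ∧ y ≠ z :=
    ⟨⟨2 * n - 3 - y, by omega⟩, by dsimp only; omega, by simp [Fin.ext_iff]; omega⟩
  have hyz' := Fin.val_ne_of_ne hyz
  have had : (subdividedK4 n).Adj ⟨n - 3, by omega⟩ z := by
    simp [subdividedK4_adj (by omega : 3 ≤ n)]; omega
  have hbd : (subdividedK4 n).Adj ⟨0, by omega⟩ z := by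
    simp [subdividedK4_adj (by omega : 3 ≤ n)]; omega
  have hyd : (subdividedK4 n).Adj y z := by
    simp [subdividedK4_adj (by omega : 3 ≤ n)]; omega
  rcases hR.rel_or_rel had with haz | hza <;> rcases hR.rel_or_rel hbd with hbz | hzb
  · exact hF.not_rel_start_of_rel_end hn hy hz hyz hay haz hbz
  · rcases hR.rel_or_rel hyd with h | h
    · exact hF.not_rel_top_of_rel_end_start hn hy hz hyz haz hyb hzb h
    · exact hF.not_rel_top_of_rel_end_start hn hz hy hyz.symm hay hzb hyb h
  · rcases hR.rel_or_rel hyd with h | h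
    · exact hF.not_rel_top_of_rel_start hn hy hz hyz hbz h
    · exact hF.not_rel_top_of_rel_end hn hy hz hyz hza h
  · exact hF.not_rel_end_of_rel_start hn hy hz hyz hyb hzb hza

lemma hgraph_not_diamLE {n : ℕ} (hn : 5 ≤ n) :
    ¬∃ R : Fin n → Fin n → Prop, IsOrientation (Hgraph n) R ∧ DiamLE R (n - 2) := by
  rintro ⟨R, hR, hd⟩
  let e := subdividedK4IsoHgraph hn
  exact subdividedK4_not_diamLE hn (hR.comap e) (hd.comap e.toEquiv)

theorem stmt_7 (n : ℕ) (hn : 5 ≤ n) :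
    ∃ G : SimpleGraph (Fin n), Bridgeless G ∧ G.edgeSet.ncard = n + 2 ∧
      ¬ ∃ R : Fin n → Fin n → Prop, IsOrientation G R ∧ DiamLE R (n - 2) :=
  ⟨Hgraph n, hgraph_bridgeless hn, hgraph_edgeSet_ncard hn, hgraph_not_diamLE hn⟩
end

section
/- Every Hamiltonian graph of order n ≥ 5 with at least n + 3 edges has an orientation of diameter at most n - 2. -/
/-!
Label a Hamiltonian cycle by `ZMod n` and orient it as `a → a + 1`. Then every vertex reaches every
other one within `n - 2` steps, except its predecessor, which is `n - 1` steps away. From `a`, a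
chord `x → y` with `x` before `y` along the cycle, not joining consecutive vertices, shortcuts the
walk to `a - 1`. There are at least three chords, and they can be oriented so that every `a` sees
such a forward chord: the pattern recording which chords point forward as seen from `a` changes
only at the six points following a chord endpoint, so it takes at most six of its eight possible
values, and orienting the chords against a missing pattern works. The remaining edges are oriented
arbitrarily.
-/

open SimpleGraph

theorem RelPow.trans {V : Type*} {R : V → V → Prop} {j k : ℕ} {u v w : V}
    (huv : RelPow R j u v) (hvw : RelPow R k v w) : RelPow R (j + k) u w := by
  induction j generalizing u with
  | zero => cases huv; simpa using hvw
  | succ j ih =>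
    obtain ⟨x, hux, hxv⟩ := huv
    rw [Nat.succ_add]
    exact ⟨x, hux, ih hxv⟩

theorem RelPow.map {V W : Type*} {R : V → V → Prop} {S : W → W → Prop} (g : V → W)
    (hg : ∀ u v, R u v → S (g u) (g v)) {k : ℕ} {u v : V} (h : RelPow R k u v) :
    RelPow S k (g u) (g v) := by
  induction k generalizing u with
  | zero => exact congrArg g h
  | succ k ih =>
    obtain ⟨w, huw, hwv⟩ := h
    exact ⟨g w, hg u w huw, ih hwv⟩

theorem RelPow.self_add_natCast {M : Type*} [AddCommMonoidWithOne M] {R : M → M → Prop}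
    (hR : ∀ a, R a (a + 1)) (k : ℕ) (a : M) : RelPow R k a (a + k) := by
  induction k generalizing a with
  | zero => simp [RelPow]
  | succ k ih =>
    refine ⟨a + 1, hR a, ?_⟩
    convert ih (a + 1) using 1
    rw [Nat.cast_succ]
    abel

theorem SimpleGraph.exists_isOrientation_of_antisymm {V : Type*} (G : SimpleGraph V)
    {A : V → V → Prop} (hAG : ∀ u v, A u v → G.Adj u v) (hA : ∀ u v, A u v → ¬ A v u) :
    ∃ R, IsOrientation G R ∧ ∀ u v, A u v → R u v := by
  refine ⟨fun u v => G.Adj u v ∧ (A u v ∨ ¬ A v u ∧ WellOrderingRel u v),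
    ⟨fun u v h => h.1, fun u v huv => ?_⟩, fun u v h => ⟨hAG u v h, Or.inl h⟩⟩
  have htri := trichotomous_of WellOrderingRel u v
  have hasymm : WellOrderingRel u v → ¬ WellOrderingRel v u := asymm_of WellOrderingRel
  have := hA u v
  have := hA v u
  have := huv.ne
  tauto

theorem SimpleGraph.Iso.exists_isOrientation_diamLE {V W : Type*} {G : SimpleGraph V}
    {G' : SimpleGraph W} (φ : G ≃g G') {R : V → V → Prop} {d : ℕ} (hR : IsOrientation G R)
    (hd : DiamLE R d) : ∃ R' : W → W → Prop, IsOrientation G' R' ∧ DiamLE R' d := by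
  refine ⟨fun u v => R (φ.symm u) (φ.symm v), ⟨fun u v h => ?_, fun u v h => ?_⟩, fun u v => ?_⟩
  · exact φ.symm.map_adj_iff.mp (hR.1 _ _ h)
  · exact hR.2 _ _ (φ.symm.map_adj_iff.mpr h)
  · obtain ⟨k, hk, hpath⟩ := hd (φ.symm u) (φ.symm v)
    refine ⟨k, hk, ?_⟩
    simpa using hpath.map φ (fun a b hab => by simpa using hab)

namespace ZMod

variable {n : ℕ} [NeZero n]

theorem val_neg_one_eq_sub_one : (-1 : ZMod n).val = n - 1 := by
  obtain ⟨m, rfl⟩ := Nat.exists_eq_succ_of_ne_zero (NeZero.ne n)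
  exact val_neg_one m

theorem val_add_one_of_ne_neg_one {z : ZMod n} (hz : z ≠ -1) : (z + 1).val = z.val + 1 := by
  have hlt : z.val + 1 < n := by
    refine lt_of_le_of_ne z.val_lt fun h => hz ?_
    have := congrArg (Nat.cast : ℕ → ZMod n) h
    push_cast [natCast_zmod_val, natCast_self] at this
    linear_combination this
  conv_rhs => rw [← val_cast_of_lt hlt]
  push_cast [natCast_zmod_val]
  rfl

theorem val_sub_sub_one {x a : ZMod n} (h : a ≠ x + 1) :
    (x - (a - 1)).val = (x - a).val + 1 := by
  rw [show x - (a - 1) = x - a + 1 by ring]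
  exact val_add_one_of_ne_neg_one fun h' => h (by linear_combination -h')

theorem range_subset_image_of_eq_sub_one {β : Type*} {g : ZMod n → β} {S : Set (ZMod n)}
    (hS : S.Nonempty) (hg : ∀ a ∉ S, g a = g (a - 1)) : Set.range g ⊆ g '' S := by
  have key : ∀ k : ℕ, ∀ a : ZMod n, a - k ∈ S → g a ∈ g '' S := by
    intro k
    induction k with
    | zero => intro a ha; exact ⟨a, by simpa using ha, rfl⟩
    | succ k ih =>
      intro a ha
      by_cases haS : a ∈ S
      · exact ⟨a, haS, rfl⟩
      rw [hg a haS]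
      exact ih _ (by convert ha using 1; push_cast; ring)
  rintro _ ⟨a, rfl⟩
  obtain ⟨s, hs⟩ := hS
  exact key (a - s).val a (by rwa [natCast_zmod_val, sub_sub_cancel])

theorem exists_orientation_forward {ι : Type*} [Finite ι] (e : ι → Sym2 (ZMod n))
    (he : ∀ i, ¬ (e i).IsDiag) (hι : 3 ≤ Nat.card ι) :
    ∃ x y : ι → ZMod n, (∀ i, s(x i, y i) = e i) ∧ ∀ a, ∃ i, (x i - a).val < (y i - a).val := by
  have hrep : ∀ i, ∃ c d : ZMod n, s(c, d) = e i :=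
    fun i => (e i).inductionOn fun c d => ⟨c, d, rfl⟩
  choose c d hcd using hrep
  have hne : ∀ i, c i ≠ d i :=
    fun i h => he i (by rw [← hcd i, h]; exact Sym2.mk_isDiag_iff.mpr rfl)
  let pat : ZMod n → ι → Bool := fun a i => decide ((c i - a).val < (d i - a).val)
  let S : Set (ZMod n) := Set.range (fun i => c i + 1) ∪ Set.range (fun i => d i + 1)
  have hpat : ∀ a ∉ S, pat a = pat (a - 1) := by
    intro a ha
    simp only [S, Set.mem_union, Set.mem_range, not_or, not_exists] at ha
    funext i
    simp only [pat, val_sub_sub_one (Ne.symm (ha.1 i)), val_sub_sub_one (Ne.symm (ha.2 i)),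
      Nat.add_lt_add_iff_right]
  obtain ⟨i₀⟩ : Nonempty ι := (Nat.card_pos_iff.mp (by omega)).1
  have hrange := range_subset_image_of_eq_sub_one ⟨c i₀ + 1, Or.inl ⟨i₀, rfl⟩⟩ hpat
  have hpow : ∀ k, 3 ≤ k → 2 * k < 2 ^ k := by
    intro k hk
    induction k, hk using Nat.le_induction with
    | base => norm_num
    | succ k _ ih => rw [pow_succ]; omega
  obtain ⟨δ, hδ⟩ : ∃ δ, δ ∉ Set.range pat := by
    by_contra! h
    have hcount : (Set.range pat).ncard < Nat.card (ι → Bool) := calc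
      (Set.range pat).ncard ≤ (pat '' S).ncard := Set.ncard_le_ncard hrange
      _ ≤ S.ncard := Set.ncard_image_le
      _ ≤ Nat.card ι + Nat.card ι := by
        refine (Set.ncard_union_le _ _).trans (add_le_add ?_ ?_) <;>
          exact Finite.card_range_le _
      _ < Nat.card (ι → Bool) := by simpa [Nat.card_fun, two_mul] using hpow _ hι
    rw [Set.eq_univ_of_forall h, Set.ncard_univ] at hcount
    exact lt_irrefl _ hcount
  refine ⟨fun i => if δ i then d i else c i, fun i => if δ i then c i else d i,
    fun i => ?_, fun a => ?_⟩
  · rw [← hcd i]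
    dsimp only
    split_ifs
    exacts [Sym2.eq_swap, rfl]
  · obtain ⟨i, hi⟩ : ∃ i, pat a i ≠ δ i := by
      by_contra! h
      exact hδ ⟨a, funext h⟩
    have hval : (c i - a).val ≠ (d i - a).val :=
      fun h => hne i (sub_left_injective (val_injective n h))
    refine ⟨i, ?_⟩
    cases hδi : δ i <;> simp only [hδi, pat, ne_eq, decide_eq_true_eq, decide_eq_false_iff_not,
      Bool.false_eq_true, ↓reduceIte] at hi ⊢ <;> omega

end ZMod

theorem diamLE_of_forward_chords {n : ℕ} [NeZero n] {R : ZMod n → ZMod n → Prop}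
    (hcyc : ∀ a, R a (a + 1))
    (hchord : ∀ a, ∃ x y, R x y ∧ y ≠ x + 1 ∧ (x - a).val < (y - a).val) :
    DiamLE R (n - 2) := by
  intro u w
  have hw : u + ((w - u).val : ZMod n) = w := by rw [ZMod.natCast_zmod_val]; ring
  have hm : (w - u).val < n := ZMod.val_lt _
  by_cases hshort : (w - u).val ≤ n - 2
  · have huw := RelPow.self_add_natCast hcyc (w - u).val u
    rw [hw] at huw
    exact ⟨_, hshort, huw⟩
  -- otherwise `w` is the predecessor of `u`: leave the cycle along a chord jumping forward
  obtain ⟨x, y, hxy, hy, hlt⟩ := hchord u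
  have hjump : (x - u).val + 2 ≤ (y - u).val := by
    refine Nat.succ_le_of_lt (lt_of_le_of_ne hlt fun h => hy ?_)
    have := congrArg (Nat.cast : ℕ → ZMod n) h
    push_cast [ZMod.natCast_zmod_val] at this
    linear_combination -this
  have hyu : (y - u).val < n := ZMod.val_lt _
  have hx : u + ((x - u).val : ZMod n) = x := by rw [ZMod.natCast_zmod_val]; ring
  have hy : y + (((w - u).val - (y - u).val : ℕ) : ZMod n) = w := by
    rw [Nat.cast_sub (by omega), ZMod.natCast_zmod_val, ZMod.natCast_zmod_val]; ring
  refine ⟨(x - u).val + (1 + ((w - u).val - (y - u).val)), by omega, ?_⟩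
  have hux := RelPow.self_add_natCast hcyc (x - u).val u
  have hyw := RelPow.self_add_natCast hcyc ((w - u).val - (y - u).val) y
  rw [hx] at hux
  rw [hy] at hyw
  exact hux.trans (RelPow.trans ⟨y, hxy, rfl⟩ hyw)

theorem SimpleGraph.IsHamiltonian.exists_equiv_zmod {V : Type*} [Fintype V] [DecidableEq V]
    {G : SimpleGraph V} (hG : G.IsHamiltonian) (hV : Fintype.card V ≠ 1) :
    ∃ f : ZMod (Fintype.card V) ≃ V, ∀ a, G.Adj (f a) (f (a + 1)) := by
  obtain ⟨v, p, hp⟩ := hG hV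
  set n := Fintype.card V
  have hlen : p.length = n := hp.length_eq
  have hpos : 0 < n := Fintype.card_pos_iff.mpr ⟨v⟩
  have : NeZero n := ⟨hpos.ne'⟩
  have hinj : Function.Injective fun a : ZMod n => p.getVert a.val := by
    intro a b hab
    refine ZMod.val_injective n (hp.isCycle.getVert_injOn' ?_ ?_ hab) <;>
      simp only [Set.mem_ofPred_eq, hlen] <;> have := ZMod.val_lt a <;> have := ZMod.val_lt b <;>
      omega
  refine ⟨Equiv.ofBijective _ ((Fintype.bijective_iff_injective_and_card _).mpr
    ⟨hinj, ZMod.card n⟩), fun a => ?_⟩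
  simp only [Equiv.ofBijective_apply]
  by_cases ha : a = -1
  · have := p.adj_getVert_succ (i := p.length - 1) (by omega)
    rw [Nat.sub_add_cancel (by omega), Walk.getVert_length] at this
    rwa [ha, neg_add_cancel, ZMod.val_zero, Walk.getVert_zero, ZMod.val_neg_one_eq_sub_one, ← hlen]
  · rw [ZMod.val_add_one_of_ne_neg_one ha]
    exact p.adj_getVert_succ (by have := ZMod.val_lt a; omega)

theorem exists_isOrientation_diamLE_of_adj_add_one {n : ℕ} (hn : 3 ≤ n)
    (G : SimpleGraph (ZMod n)) (hcyc : ∀ a, G.Adj a (a + 1))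
    (hsize : n + 3 ≤ G.edgeSet.ncard) :
    ∃ R : ZMod n → ZMod n → Prop, IsOrientation G R ∧ DiamLE R (n - 2) := by
  have : NeZero n := ⟨by omega⟩
  have htwo : (2 : ZMod n) ≠ 0 := by
    intro h
    have := Nat.le_of_dvd two_pos ((ZMod.natCast_eq_zero_iff 2 n).mp (mod_cast h))
    omega
  let C : Set (Sym2 (ZMod n)) := Set.range fun a => s(a, a + 1)
  have hC : C.ncard = n := by
    rw [Set.ncard_range_of_injective, Nat.card_zmod]
    intro a b hab
    rcases Sym2.eq_iff.mp hab with ⟨h, -⟩ | ⟨h₁, h₂⟩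
    · exact h
    · exact absurd (by linear_combination h₂ - h₁) htwo
  obtain ⟨T, hT, hT3⟩ := Set.exists_subset_card_eq
    (show 3 ≤ (G.edgeSet \ C).ncard by have := Set.le_ncard_sdiff C G.edgeSet; omega)
  have : Finite T := (Set.finite_of_ncard_pos (by omega)).to_subtype
  obtain ⟨x, y, hxy, hforward⟩ := ZMod.exists_orientation_forward (fun i : T => (i : Sym2 _))
    (fun i => G.not_isDiag_of_mem_edgeSet (hT i.2).1) (by rw [Nat.card_coe_set_eq, hT3])
  have hadj : ∀ i, G.Adj (x i) (y i) := fun i => by rw [← mem_edgeSet, hxy i]; exact (hT i.2).1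
  have hchord : ∀ i, y i ≠ x i + 1 ∧ x i ≠ y i + 1 := by
    refine fun i => ⟨fun h => (hT i.2).2 ⟨x i, ?_⟩, fun h => (hT i.2).2 ⟨y i, ?_⟩⟩
    · rw [← hxy i, h]
    · rw [← hxy i, h, Sym2.eq_swap]
  obtain ⟨R, hR, hAR⟩ := G.exists_isOrientation_of_antisymm
    (A := fun u v => v = u + 1 ∨ ∃ i, x i = u ∧ y i = v)
    (by rintro u v (rfl | ⟨i, rfl, rfl⟩); exacts [hcyc u, hadj i])
    (by
      rintro u v (rfl | ⟨i, rfl, rfl⟩) (h | ⟨j, hj₁, hj₂⟩)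
      · exact htwo (by linear_combination -h)
      · exact (hchord j).2 (by rw [hj₁, hj₂])
      · exact (hchord i).2 h
      · have hij : i = j := Subtype.ext (by rw [← hxy i, ← hxy j, hj₁, hj₂, Sym2.eq_swap])
        subst hij
        exact (hadj i).ne hj₁)
  refine ⟨R, hR, diamLE_of_forward_chords (fun a => hAR _ _ (Or.inl rfl)) fun a => ?_⟩
  obtain ⟨i, hi⟩ := hforward a
  exact ⟨x i, y i, hAR _ _ (Or.inr ⟨i, rfl, rfl⟩), (hchord i).1, hi⟩

theorem stmt_9 {V : Type*} [Fintype V] [DecidableEq V] (G : SimpleGraph V)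
    (hn : 5 ≤ Fintype.card V) (hham : G.IsHamiltonian)
    (hsize : Fintype.card V + 3 ≤ G.edgeSet.ncard) :
    ∃ R : V → V → Prop, IsOrientation G R ∧ DiamLE R (Fintype.card V - 2) := by
  obtain ⟨f, hf⟩ := hham.exists_equiv_zmod (by omega)
  have hcomap : (G.comap f).edgeSet.ncard = G.edgeSet.ncard :=
    Set.ncard_congr' (Iso.comap f G).mapEdgeSet
  obtain ⟨R, hR, hdiam⟩ :=
    exists_isOrientation_diamLE_of_adj_add_one (by omega) (G.comap f) hf (hcomap ▸ hsize)
  exact (Iso.comap f G).exists_isOrientation_diamLE hR hdiam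
end

section
/- Let C be a Hamiltonian cycle of a graph G of order n, oriented cyclically, and suppose G has two chords v_{i_1} v_{j_1} and v_{i_2} v_{j_2} of C with 1 ≤ i_1 ≤ i_2 < j_2 < j_1 ≤ n (a nested or parallel pair). Then G has an orientation of diameter at most n - 2. -/
open SimpleGraph

lemma relPow_comp' {V : Type*} {R : V → V → Prop} {k l : ℕ} {u w v : V}
    (h1 : RelPow R k u w) (h2 : RelPow R l w v) : RelPow R (k + l) u v := by
  induction k generalizing u with
  | zero =>
    have : u = w := h1
    rw [Nat.zero_add, this]; exact h2
  | succ m ih =>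
    obtain ⟨x, hx, hrest⟩ := h1
    rw [Nat.succ_add]
    exact ⟨x, hx, ih hrest⟩

theorem stmt_10 (n : ℕ) [NeZero n] (hn : 5 ≤ n) (G : SimpleGraph (Fin n))
    (hcycle : ∀ k : Fin n, G.Adj k (k + 1))
    (i₁ i₂ j₂ j₁ : Fin n)
    (h12 : (i₁ : ℕ) ≤ (i₂ : ℕ)) (h2 : (i₂ : ℕ) < (j₂ : ℕ)) (h21 : (j₂ : ℕ) < (j₁ : ℕ))
    (hf1 : G.Adj i₁ j₁) (hf2 : G.Adj i₂ j₂)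
    (hchord1 : j₁ ≠ i₁ + 1 ∧ i₁ ≠ j₁ + 1)
    (hchord2 : j₂ ≠ i₂ + 1 ∧ i₂ ≠ j₂ + 1) :
    ∃ R : Fin n → Fin n → Prop, IsOrientation G R ∧ DiamLE R (n - 2) := by
  classical
  have hti1 : (i₁ : ℕ) < n := i₁.isLt
  have htj1 : (j₁ : ℕ) < n := j₁.isLt
  have hti2 : (i₂ : ℕ) < n := i₂.isLt
  have htj2 : (j₂ : ℕ) < n := j₂.isLt
  have hval1 : ∀ k : Fin n, ((k + 1 : Fin n) : ℕ) = ((k : ℕ) + 1) % n := by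
    intro k
    have h1 : 1 % n = 1 := Nat.mod_eq_of_lt (by omega)
    rw [Fin.val_add, Fin.val_one', h1]
  have hfe : ∀ {a b : Fin n}, (a : ℕ) = (b : ℕ) → a = b := fun h => Fin.ext h
  have hb2 : (i₂ : ℕ) + 2 ≤ (j₂ : ℕ) := by
    by_contra hcon
    apply hchord2.1
    apply hfe
    rw [hval1, Nat.mod_eq_of_lt (by omega)]
    omega
  have hnot02 : ¬((i₂ : ℕ) = 0 ∧ (j₂ : ℕ) = n - 1) := by
    rintro ⟨h0, hl⟩
    apply hchord2.2
    apply hfe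
    rw [hval1, h0, hl]
    have hh : n - 1 + 1 = n := by omega
    rw [hh, Nat.mod_self]
  have hne11 : (j₁ : ℕ) ≠ (i₁ : ℕ) + 1 := by
    intro hcon
    apply hchord1.1
    apply hfe
    rw [hval1, Nat.mod_eq_of_lt (by omega)]
    omega
  have hnot01 : ¬((i₁ : ℕ) = 0 ∧ (j₁ : ℕ) = n - 1) := by
    rintro ⟨h0, hl⟩
    apply hchord1.2
    apply hfe
    rw [hval1, h0, hl]
    have hh : n - 1 + 1 = n := by omega
    rw [hh, Nat.mod_self]
  -- the direction choice
  let D : Fin n → Fin n → Prop := fun u v =>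
    (((u : ℕ) + 1 = (v : ℕ) ∨ ((u : ℕ) = n - 1 ∧ (v : ℕ) = 0)) ∨
      (¬((v : ℕ) + 1 = (u : ℕ) ∨ ((v : ℕ) = n - 1 ∧ (u : ℕ) = 0)) ∧
        (((u : ℕ) = (j₁ : ℕ) ∧ (v : ℕ) = (i₁ : ℕ)) ∨
          (¬((v : ℕ) = (j₁ : ℕ) ∧ (u : ℕ) = (i₁ : ℕ)) ∧
            (((u : ℕ) = (i₂ : ℕ) ∧ (v : ℕ) = (j₂ : ℕ)) ∨
              (¬((v : ℕ) = (i₂ : ℕ) ∧ (u : ℕ) = (j₂ : ℕ)) ∧ (u : ℕ) < (v : ℕ)))))))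
  let R : Fin n → Fin n → Prop := fun u v => G.Adj u v ∧ D u v
  have hDiff : ∀ u v : Fin n, (u : ℕ) ≠ (v : ℕ) → (D u v ↔ ¬ D v u) := by
    intro u v huv
    have hu := u.isLt
    have hv := v.isLt
    simp only [D]
    omega
  refine ⟨R, ⟨fun u v h => h.1, ?_⟩, ?_⟩
  · intro u v hadj
    have hiff := hDiff u v (fun h => hadj.ne (hfe h))
    constructor
    · rintro ⟨_, hd⟩ ⟨_, hd'⟩
      exact (hiff.mp hd) hd'
    · intro hnr
      exact ⟨hadj, hiff.mpr (fun hd => hnr ⟨hadj.symm, hd⟩)⟩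
  · -- arcs
    have hstep : ∀ k : Fin n, R k (k + 1) := by
      intro k
      refine ⟨hcycle k, ?_⟩
      have hk := k.isLt
      have h1 := hval1 k
      simp only [D]
      rcases Nat.lt_or_ge ((k : ℕ) + 1) n with hl | hg
      · rw [Nat.mod_eq_of_lt hl] at h1
        omega
      · have hkn : (k : ℕ) + 1 = n := by omega
        rw [hkn, Nat.mod_self] at h1
        omega
    have hc2arc : R i₂ j₂ :=
      ⟨hf2, Or.inr ⟨by omega, Or.inr ⟨by omega, Or.inl ⟨rfl, rfl⟩⟩⟩⟩
    have hc1arc : R j₁ i₁ :=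
      ⟨hf1.symm, Or.inr ⟨by omega, Or.inl ⟨rfl, rfl⟩⟩⟩
    have chain : ∀ d : ℕ, ∀ x y : Fin n, (x : ℕ) + d = (y : ℕ) → RelPow R d x y := by
      intro d
      induction d with
      | zero =>
        intro x y h
        exact hfe (by omega)
      | succ m ih =>
        intro x y h
        refine ⟨x + 1, hstep x, ih (x + 1) y ?_⟩
        have h1 := hval1 x
        have hx := x.isLt
        have hy := y.isLt
        rw [h1, Nat.mod_eq_of_lt (by omega)]
        omega
    -- wrap-around arc
    have hnpos : 0 < n := by omega
    set lst : Fin n := ⟨n - 1, by omega⟩ with hlstdef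
    set zer : Fin n := ⟨0, hnpos⟩ with hzerdef
    have hlv : (lst : ℕ) = n - 1 := rfl
    have hzv : (zer : ℕ) = 0 := rfl
    have hwrapeq : lst + 1 = zer := by
      apply hfe
      rw [hval1, hlv, hzv]
      have hh : n - 1 + 1 = n := by omega
      rw [hh, Nat.mod_self]
    have hwrap : R lst zer := hwrapeq ▸ hstep lst
    intro u v
    have ht := u.isLt
    have hs := v.isLt
    by_cases hle : (u : ℕ) ≤ (v : ℕ)
    · by_cases hsm : (v : ℕ) - (u : ℕ) ≤ n - 2
      · exact ⟨(v : ℕ) - (u : ℕ), hsm, chain _ u v (by omega)⟩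
      · have ht0 : (u : ℕ) = 0 := by omega
        have hs1 : (v : ℕ) = n - 1 := by omega
        refine ⟨(i₂ : ℕ) + (1 + ((v : ℕ) - (j₂ : ℕ))), by omega, ?_⟩
        exact relPow_comp' (chain _ u i₂ (by omega))
          (relPow_comp' ⟨j₂, hc2arc, rfl⟩ (chain _ j₂ v (by omega)))
    · push_neg at hle
      by_cases h2d : 2 ≤ (u : ℕ) - (v : ℕ)
      · refine ⟨(n - 1 - (u : ℕ)) + (1 + (v : ℕ)), by omega, ?_⟩
        exact relPow_comp' (chain _ u lst (by omega))
          (relPow_comp' ⟨zer, hwrap, rfl⟩ (chain _ zer v (by omega)))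
      · have hsv : (v : ℕ) + 1 = (u : ℕ) := by omega
        by_cases hta : (u : ℕ) ≤ (i₂ : ℕ)
        · refine ⟨((i₂ : ℕ) - (u : ℕ)) + (1 + ((n - 1 - (j₂ : ℕ)) + (1 + (v : ℕ)))),
            by omega, ?_⟩
          exact relPow_comp' (chain _ u i₂ (by omega))
            (relPow_comp' ⟨j₂, hc2arc, rfl⟩
              (relPow_comp' (chain _ j₂ lst (by omega))
                (relPow_comp' ⟨zer, hwrap, rfl⟩ (chain _ zer v (by omega)))))
        · by_cases htb : (j₂ : ℕ) < (u : ℕ)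
          · refine ⟨(n - 1 - (u : ℕ)) + (1 + ((i₂ : ℕ) + (1 + ((v : ℕ) - (j₂ : ℕ))))),
              by omega, ?_⟩
            exact relPow_comp' (chain _ u lst (by omega))
              (relPow_comp' ⟨zer, hwrap, rfl⟩
                (relPow_comp' (chain _ zer i₂ (by omega))
                  (relPow_comp' ⟨j₂, hc2arc, rfl⟩ (chain _ j₂ v (by omega)))))
          · refine ⟨((j₁ : ℕ) - (u : ℕ)) + (1 + ((v : ℕ) - (i₁ : ℕ))), by omega, ?_⟩
            exact relPow_comp' (chain _ u j₁ (by omega))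
              (relPow_comp' ⟨i₁, hc1arc, rfl⟩ (chain _ i₁ v (by omega)))
end
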